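/- arXiv:2512.04775 — 4 statements merged into one kernel-verified Lean document; each statement's English description precedes it below -/
import Mathlib

section
/- For every positive integer n, the number of overpartitions of n (with one color) satisfies: ̄p(n) ≡ 2 (mod 4) if n is a perfect square, ̄p(n) ≡ 0 (mod 4) if n is twice a perfect square (with c = 1, this gives 2(c+1) = 4 ≡ 0), and ̄p(n) ≡ 0 (mod 4) otherwise. -/
/-!
Modulo 4 every Euler factor satisfies `(1 - qᵏ)² = (1 - q²ᵏ)(1 + 2w)` with `w = qᵏ/(1 - qᵏ)`,
and a product of factors `1 + 2uᵢ` collapses to `1 + 2 ∑ uᵢ`. Since `∑ₖ qᵏ/(1 - qᵏ) = ∑ₙ d(n) qⁿ`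
and the number of divisors `d(n)` is odd exactly when `n` is a square, this gives
`f₁² ≡ f₂ θ` with `θ = 1 + 2 ∑_{n ≥ 1 square} qⁿ`. As `θ² ≡ 1`, the generating function `f₂/f₁²`
is `≡ θ (mod 4)`; finally, twice a nonzero square is never a square.
-/

open PowerSeries

/-- `eulerProd m` is the formal power series `f_m = ∏_{j≥1} (1 - q^{jm})`,
defined coefficientwise: for `m ≥ 1` the coefficient of `q^n` only depends on
the factors with `jm ≤ n`, so it equals the corresponding coefficient of the
finite partial product `∏_{j=1}^{n} (1 - q^{jm})`. -/
noncomputable def eulerProd (m : ℕ) : PowerSeries ℤ :=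
  PowerSeries.mk fun n =>
    PowerSeries.coeff n
      (∏ j ∈ Finset.range n, (1 - (PowerSeries.X : PowerSeries ℤ) ^ (m * (j + 1))))

open Finset

namespace Overpartition

section CharFour

variable {R : Type*} [CommRing R]

theorem prod_one_add_two_mul_of_four_eq_zero {ι : Type*} (h4 : (4 : R) = 0) (s : Finset ι)
    (f : ι → R) : ∏ i ∈ s, (1 + 2 * f i) = 1 + 2 * ∑ i ∈ s, f i := by
  induction s using Finset.cons_induction with
  | empty => simp
  | cons i s hi ih =>
    rw [prod_cons, sum_cons, ih]
    linear_combination (f i * ∑ j ∈ s, f j) * h4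

theorem one_sub_sq_of_four_eq_zero (h4 : (4 : R) = 0) {x w : R} (hw : (1 - x) * w = x) :
    (1 - x) ^ 2 = (1 - x ^ 2) * (1 + 2 * w) := by
  linear_combination (-2 * (1 + x)) * hw - x * h4

theorem two_mul_natCast_of_four_eq_zero (h4 : (4 : R) = 0) (c : ℕ) :
    2 * (c : R) = if Odd c then 2 else 0 := by
  obtain ⟨t, rfl | rfl⟩ := Nat.even_or_odd' c
  · rw [if_neg (Nat.not_odd_iff_even.2 (even_two_mul t))]
    push_cast
    linear_combination t * h4
  · rw [if_pos (odd_two_mul_add_one t)]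
    push_cast
    linear_combination t * h4

end CharFour

theorem isSquare_iff_even_factorization {n : ℕ} (hn : n ≠ 0) :
    IsSquare n ↔ ∀ p, Even (n.factorization p) := by
  constructor
  · rintro ⟨k, rfl⟩ p
    have hk : k ≠ 0 := by rintro rfl; simp at hn
    simp [Nat.factorization_mul hk hk, Even.add_self]
  · intro h
    refine ⟨n.factorization.prod fun p e => p ^ (e / 2), ?_⟩
    rw [← Finsupp.prod_mul (h₁ := fun p e => p ^ (e / 2))]
    conv_lhs => rw [← Nat.prod_factorization_pow_eq_self hn]
    refine Finsupp.prod_congr fun p _ => ?_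
    rw [← pow_add, ← two_mul, Nat.two_mul_div_two_of_even (h p)]

theorem odd_prod_iff {ι : Type*} {s : Finset ι} {f : ι → ℕ} :
    Odd (∏ i ∈ s, f i) ↔ ∀ i ∈ s, Odd (f i) := by
  induction s using Finset.cons_induction with
  | empty => simp
  | cons i s hi ih => rw [prod_cons, Nat.odd_mul, ih, forall_mem_cons]

theorem odd_card_divisors_iff {n : ℕ} (hn : n ≠ 0) : Odd #n.divisors ↔ IsSquare n := by
  rw [Nat.card_divisors hn, isSquare_iff_even_factorization hn, odd_prod_iff]
  simp_rw [Nat.odd_add_one, Nat.not_odd_iff_even]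
  refine ⟨fun h p => ?_, fun h p _ => h p⟩
  by_cases hp : p ∈ n.primeFactors
  · exact h p hp
  · rw [← Nat.support_factorization, Finsupp.notMem_support_iff] at hp
    exact hp ▸ Even.zero

theorem not_isSquare_two_mul_sq {k : ℕ} (hk : k ≠ 0) : ¬ IsSquare (2 * k ^ 2) := by
  rw [isSquare_iff_even_factorization (by positivity)]
  intro h
  have h2 := h 2
  rw [Nat.factorization_mul two_ne_zero (pow_ne_zero 2 hk), Nat.factorization_pow] at h2
  simp [Nat.prime_two.factorization_self, parity_simps] at h2

section PowerSeries

variable (R : Type*) [CommRing R]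

theorem coeff_two_mul (n : ℕ) (f : R⟦X⟧) : coeff n (2 * f) = 2 * coeff n f := by
  rw [← map_ofNat C 2, coeff_C_mul]

theorem powerSeries_four_eq_zero (h4 : (4 : R) = 0) : (4 : R⟦X⟧) = 0 := by
  rw [← map_ofNat C, h4, map_zero]

noncomputable def geomTail (k : ℕ) : R⟦X⟧ :=
  mk fun n => if n ≠ 0 ∧ k ∣ n then 1 else 0

theorem one_sub_X_pow_mul_geomTail {k : ℕ} (hk : k ≠ 0) :
    (1 - X ^ k) * geomTail R k = X ^ k := by
  ext n
  rw [sub_mul, one_mul, map_sub, mul_comm, coeff_mul_X_pow', coeff_X_pow]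
  simp only [geomTail, coeff_mk]
  rcases lt_trichotomy n k with hn | rfl | hn
  · simp only [hn.not_ge, hn.ne, if_false, sub_zero, ite_eq_right_iff, and_imp]
    exact fun h0 hd => absurd (Nat.eq_zero_of_dvd_of_lt hd hn) h0
  · simp [hk]
  · simp [hn.le, hn.ne', hn.not_ge, Nat.dvd_sub_self_right, Nat.sub_ne_zero_of_lt hn,
      Nat.ne_zero_of_lt hn]

theorem coeff_sum_geomTail {n N : ℕ} (hn : n ≠ 0) (hnN : n ≤ N) :
    coeff n (∑ j ∈ range N, geomTail R (j + 1)) = #n.divisors := by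
  have hdiv : {d ∈ range (N + 1) | d ∣ n} = n.divisors := by
    ext d
    simp only [mem_filter, mem_range, Nat.mem_divisors, ne_eq, hn, not_false_eq_true, and_true]
    exact ⟨And.right, fun hd => ⟨by linarith [Nat.le_of_dvd (Nat.pos_of_ne_zero hn) hd], hd⟩⟩
  simp only [map_sum, geomTail, coeff_mk, ne_eq, hn, not_false_eq_true, true_and]
  rw [← hdiv, ← sum_boole, sum_range_succ' _ N]
  simp [hn]

noncomputable def eulerPartialProd (m N : ℕ) : R⟦X⟧ :=
  ∏ j ∈ range N, (1 - X ^ (m * (j + 1)))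

theorem eulerPartialProd_one_sq (h4 : (4 : R) = 0) (N : ℕ) :
    eulerPartialProd R 1 N ^ 2 =
      eulerPartialProd R 2 N * (1 + 2 * ∑ j ∈ range N, geomTail R (j + 1)) := by
  replace h4 := powerSeries_four_eq_zero R h4
  rw [← prod_one_add_two_mul_of_four_eq_zero h4, eulerPartialProd, eulerPartialProd, ← prod_pow,
    ← prod_mul_distrib]
  refine prod_congr rfl fun j _ => ?_
  rw [one_mul, mul_comm 2, pow_mul]
  exact one_sub_sq_of_four_eq_zero h4 (one_sub_X_pow_mul_geomTail R j.succ_ne_zero)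

theorem map_eulerPartialProd (f : ℤ →+* R) (m N : ℕ) :
    map f (eulerPartialProd ℤ m N) = eulerPartialProd R m N := by
  simp [eulerPartialProd, map_prod]

theorem coeff_eulerProd {m n N : ℕ} (hm : m ≠ 0) (h : n ≤ N) :
    coeff n (eulerProd m) = coeff n (eulerPartialProd ℤ m N) := by
  induction N, h using Nat.le_induction with
  | base => simp only [eulerProd, eulerPartialProd, coeff_mk]
  | succ N hN ih =>
    rw [ih, eulerPartialProd, eulerPartialProd, prod_range_succ, mul_sub, mul_one, map_sub,
      coeff_mul_X_pow', if_neg (by nlinarith [Nat.one_le_iff_ne_zero.2 hm]), sub_zero]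

variable {R}

theorem mk_span_X_pow_eq_iff {N : ℕ} {f g : R⟦X⟧} :
    Ideal.Quotient.mk (Ideal.span {X ^ N}) f = Ideal.Quotient.mk (Ideal.span {X ^ N}) g ↔
      ∀ n < N, coeff n f = coeff n g := by
  simp only [Ideal.Quotient.eq, Ideal.mem_span_singleton, X_pow_dvd_iff, map_sub, sub_eq_zero]

end PowerSeries

/-- The reduction mod 4 of `φ(q) = ∑_{k ∈ ℤ} q^{k²}`, which is also that of `φ(-q)`. -/
noncomputable def thetaModFour : (ZMod 4)⟦X⟧ :=
  1 + 2 * mk fun n => if n ≠ 0 ∧ IsSquare n then 1 else 0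

noncomputable def eulerProdModFour (m : ℕ) : (ZMod 4)⟦X⟧ :=
  map (Int.castRingHom (ZMod 4)) (eulerProd m)

theorem thetaModFour_mul_self : thetaModFour * thetaModFour = 1 := by
  rw [thetaModFour]
  generalize (mk fun n => if n ≠ 0 ∧ IsSquare n then 1 else 0 : (ZMod 4)⟦X⟧) = S
  linear_combination (S + S ^ 2) * powerSeries_four_eq_zero (ZMod 4) rfl

theorem coeff_thetaModFour {n : ℕ} (hn : n ≠ 0) :
    coeff n thetaModFour = if IsSquare n then 2 else 0 := by
  simp [thetaModFour, coeff_one, hn, coeff_two_mul]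

theorem coeff_thetaModFour_eq_coeff_sum_geomTail {n N : ℕ} (hnN : n ≤ N) :
    coeff n thetaModFour = coeff n (1 + 2 * ∑ j ∈ range N, geomTail (ZMod 4) (j + 1)) := by
  rcases eq_or_ne n 0 with rfl | hn
  · simp [thetaModFour, geomTail]
  rw [coeff_thetaModFour hn, map_add, coeff_two_mul, coeff_sum_geomTail _ hn hnN,
    two_mul_natCast_of_four_eq_zero rfl]
  simp only [odd_card_divisors_iff hn, coeff_one, if_neg hn, zero_add]

theorem coeff_eulerProdModFour {m n N : ℕ} (hm : m ≠ 0) (h : n ≤ N) :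
    coeff n (eulerProdModFour m) = coeff n (eulerPartialProd (ZMod 4) m N) := by
  rw [eulerProdModFour, coeff_map, coeff_eulerProd hm h, ← coeff_map, map_eulerPartialProd]

theorem eulerProdModFour_one_sq : eulerProdModFour 1 ^ 2 = eulerProdModFour 2 * thetaModFour := by
  ext n
  let π := Ideal.Quotient.mk (Ideal.span {(X : (ZMod 4)⟦X⟧) ^ (n + 1)})
  have hE (m : ℕ) (hm : m ≠ 0) : π (eulerProdModFour m) = π (eulerPartialProd _ m n) :=
    mk_span_X_pow_eq_iff.2 fun i hi => coeff_eulerProdModFour hm (Nat.le_of_lt_succ hi)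
  have hθ : π thetaModFour = π (1 + 2 * ∑ j ∈ range n, geomTail (ZMod 4) (j + 1)) :=
    mk_span_X_pow_eq_iff.2 fun i hi =>
      coeff_thetaModFour_eq_coeff_sum_geomTail (Nat.le_of_lt_succ hi)
  refine mk_span_X_pow_eq_iff.1 ?_ n n.lt_succ_self
  rw [map_pow, map_mul, hE 1 one_ne_zero, hE 2 two_ne_zero, hθ, ← map_pow, ← map_mul,
    eulerPartialProd_one_sq _ rfl]

theorem isUnit_eulerProdModFour (m : ℕ) : IsUnit (eulerProdModFour m) := by
  rw [isUnit_iff_constantCoeff, ← coeff_zero_eq_constantCoeff_apply]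
  simp [eulerProdModFour, eulerProd]

theorem map_mk_eq_thetaModFour {a : ℕ → ℤ} (ha : mk a * eulerProd 1 ^ 2 = eulerProd 2) :
    map (Int.castRingHom (ZMod 4)) (mk a) = thetaModFour := by
  set A := map (Int.castRingHom (ZMod 4)) (mk a)
  have hA : A * eulerProdModFour 1 ^ 2 = eulerProdModFour 2 := by
    simpa only [map_mul, map_pow, eulerProdModFour] using congrArg (map (Int.castRingHom (ZMod 4))) ha
  have hAθ : A * thetaModFour = 1 := by
    refine (isUnit_eulerProdModFour 2).mul_left_cancel ?_
    calc eulerProdModFour 2 * (A * thetaModFour)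
        = A * (eulerProdModFour 2 * thetaModFour) := by ring
      _ = eulerProdModFour 2 * 1 := by rw [← eulerProdModFour_one_sq, hA, mul_one]
  calc A = A * (thetaModFour * thetaModFour) := by rw [thetaModFour_mul_self, mul_one]
    _ = thetaModFour := by rw [← mul_assoc, hAθ, one_mul]

end Overpartition

/-- Sellers' congruence for overpartitions (the c = 1 case): if
`a : ℕ → ℤ` is the overpartition counting function, determined by the
generating function identity Σ a(n) qⁿ = f₂ / f₁², then for every positive n,
a(n) ≡ 2 (mod 4) if n is a square, a(n) ≡ 0 (mod 4) if n is twice a square,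
and a(n) ≡ 0 (mod 4) otherwise. -/
theorem stmt_10 (a : ℕ → ℤ)
    (ha : PowerSeries.mk a * eulerProd 1 ^ 2 = eulerProd 2) :
    ∀ n : ℕ, 0 < n →
      ((∃ k : ℕ, n = k ^ 2) → a n ≡ 2 [ZMOD 4]) ∧
      ((∃ k : ℕ, n = 2 * k ^ 2) → a n ≡ 0 [ZMOD 4]) ∧
      ((¬ ∃ k : ℕ, n = k ^ 2) → (¬ ∃ k : ℕ, n = 2 * k ^ 2) → a n ≡ 0 [ZMOD 4]) := by
  intro n hn
  have han : (a n : ZMod 4) = if IsSquare n then 2 else 0 := by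
    rw [← Overpartition.coeff_thetaModFour hn.ne', ← Overpartition.map_mk_eq_thetaModFour ha,
      coeff_map, coeff_mk, eq_intCast]
  have hmod (r : ℤ) (h : (a n : ZMod 4) = r) : a n ≡ r [ZMOD 4] :=
    (ZMod.intCast_eq_intCast_iff _ _ 4).1 h
  refine ⟨fun ⟨k, hk⟩ => hmod 2 ?_, fun ⟨k, hk⟩ => hmod 0 ?_, fun hsq _ => hmod 0 ?_⟩
  · rw [han, if_pos ⟨k, hk.trans (sq k)⟩, Int.cast_ofNat]
  · have hk0 : k ≠ 0 := by rintro rfl; simp_all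
    rw [han, hk, if_neg (Overpartition.not_isSquare_two_mul_sq hk0), Int.cast_zero]
  · rw [han, if_neg fun ⟨k, hk⟩ => hsq ⟨k, hk.trans (sq k).symm⟩, Int.cast_zero]
end

section
/- For all positive integers n and c ≥ 1, the number of generalized overcubic partitions ̄a_c(n) satisfies ̄a_c(n) ≡ 2 (mod 4) if n = k^2 for some integer k, ̄a_c(n) ≡ 2(c+1) (mod 4) if n = 2k^2 for some integer k, and ̄a_c(n) ≡ 0 (mod 4) otherwise. -/
/-!
Modulo 4 Gauss's identity `f_m² = f_{2m} · Σ_{k∈ℤ} (-q^m)^{k²}` can be proved one factor at a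
time. Over `ℤ/4`, `(1 - x)² = (1 - x²)(1 + 2x/(1 - x))`, and `(1 + 2u)(1 + 2v) = 1 + 2(u + v)`, so
`f_m² ≡ f_{2m} (1 + 2 Σ_{d≥1} q^{md}/(1 - q^{md}))`. The coefficient of `q^{mt}` in this Lambert
series is the number of divisors of `t`, which is odd exactly when `t` is a square; hence
`f_m² ≡ f_{2m} θ_m` with `θ_m = 1 + 2 Σ_{k≥1} q^{mk²}`. As `θ_m² ≡ 1`, the generating function is
`θ_1 θ_2^{c+1} ≡ 1 + 2 Σ_{k≥1} q^{k²} + 2(c+1) Σ_{k≥1} q^{2k²}` modulo 4, and no positive integer is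
both a square and twice a square.

Infinite products are compared through their images in `R⟦X⟧ ⧸ (X^{n+1})`, where only finitely
many factors matter.
-/

open PowerSeries

open Finset

namespace Overcubic

theorem coeff_natCast_mul {R : Type*} [Semiring R] (k n : ℕ) (F : R⟦X⟧) :
    coeff n ((k : R⟦X⟧) * F) = k * coeff n F := by
  rw [← map_natCast (C (R := R)) k, coeff_C_mul]

theorem coeff_two_mul {R : Type*} [Semiring R] (n : ℕ) (F : R⟦X⟧) :
    coeff n (2 * F) = 2 * coeff n F := by
  rw [← map_ofNat (C (R := R)) 2, coeff_C_mul]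

section Truncation

variable {R : Type*} [CommRing R]

noncomputable abbrev truncMod (n : ℕ) : R⟦X⟧ →+* R⟦X⟧ ⧸ Ideal.span {(X : R⟦X⟧) ^ (n + 1)} :=
  Ideal.Quotient.mk _

theorem truncMod_eq_iff {n : ℕ} {F G : R⟦X⟧} :
    truncMod n F = truncMod n G ↔ ∀ i ≤ n, coeff i F = coeff i G := by
  simp only [Ideal.Quotient.eq, Ideal.mem_span_singleton, X_pow_dvd_iff, map_sub, sub_eq_zero,
    Nat.lt_succ_iff]

theorem truncMod_one_sub_X_pow {n k : ℕ} (h : n < k) : truncMod n (1 - X ^ k : R⟦X⟧) = 1 := by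
  rw [map_sub, map_one, sub_eq_self, Ideal.Quotient.eq_zero_iff_mem, Ideal.mem_span_singleton]
  exact pow_dvd_pow X h

variable (R) in
noncomputable def eulerTrunc (m N : ℕ) : R⟦X⟧ := ∏ j ∈ range N, (1 - X ^ (m * (j + 1)))

theorem map_eulerTrunc {S : Type*} [CommRing S] (f : R →+* S) (m N : ℕ) :
    map f (eulerTrunc R m N) = eulerTrunc S m N := by
  simp [eulerTrunc, map_prod]

theorem truncMod_eulerTrunc {m n N : ℕ} (hm : 0 < m) (h : n ≤ N) :
    truncMod n (eulerTrunc R m N) = truncMod n (eulerTrunc R m n) := by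
  obtain ⟨K, rfl⟩ := Nat.exists_eq_add_of_le h
  have htail : truncMod n (∏ j ∈ range K, (1 - X ^ (m * (n + j + 1))) : R⟦X⟧) = 1 := by
    rw [map_prod]
    exact prod_eq_one fun j _ => truncMod_one_sub_X_pow <|
      (Nat.lt_succ_of_le (Nat.le_add_right n j)).trans_le (Nat.le_mul_of_pos_left _ hm)
  rw [eulerTrunc, prod_range_add, map_mul, htail, mul_one, eulerTrunc]

theorem coeff_eulerProd {m n N : ℕ} (hm : 0 < m) (h : n ≤ N) :
    coeff n (eulerProd m) = coeff n (eulerTrunc ℤ m N) := by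
  rw [eulerProd, coeff_mk]
  exact (truncMod_eq_iff.mp (truncMod_eulerTrunc hm h) n le_rfl).symm

theorem truncMod_map_eulerProd (f : ℤ →+* R) {m : ℕ} (hm : 0 < m) (N : ℕ) :
    truncMod N (map f (eulerProd m)) = truncMod N (eulerTrunc R m N) := by
  refine truncMod_eq_iff.mpr fun i hi => ?_
  rw [coeff_map, coeff_eulerProd hm hi, ← coeff_map, map_eulerTrunc]

end Truncation

noncomputable def multiplesSeries (R : Type*) [Ring R] (k : ℕ) : R⟦X⟧ :=
  mk fun n => if 0 < n ∧ k ∣ n then 1 else 0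

theorem one_sub_X_pow_mul_multiplesSeries {R : Type*} [Ring R] {k : ℕ} (hk : 0 < k) :
    (1 - X ^ k) * multiplesSeries R k = X ^ k := by
  ext n
  rw [sub_mul, one_mul, map_sub, coeff_X_pow_mul', multiplesSeries, coeff_mk, coeff_mk, coeff_X_pow]
  rcases lt_trichotomy n k with h | rfl | h
  · have : ¬ (0 < n ∧ k ∣ n) := fun ⟨hn, hd⟩ => absurd (Nat.le_of_dvd hn hd) (by omega)
    simp [this, h.not_ge, h.ne]
  · simp [hk]
  · have : k ∣ n - k ↔ k ∣ n := Nat.dvd_sub_iff_left h.le dvd_rfl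
    simp [h.le, h.ne', this, h.trans' hk, Nat.sub_pos_of_lt h]

theorem sq_one_sub_add_four_mul {R : Type*} [CommRing R] {x g : R} (h : (1 - x) * g = x) :
    (1 - x) ^ 2 + 4 * x = (1 - x ^ 2) * (1 + 2 * g) := by
  linear_combination (-2 * (1 + x)) * h

theorem four_eq_zero : (4 : (ZMod 4)⟦X⟧) = 0 := by
  rw [← map_ofNat (C (R := ZMod 4)) 4]
  exact map_eq_zero_iff _ (C_injective) |>.mpr rfl

noncomputable def lambertTrunc (R : Type*) [Ring R] (m N : ℕ) : R⟦X⟧ :=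
  ∑ j ∈ range N, multiplesSeries R (m * (j + 1))

theorem eulerTrunc_sq {m : ℕ} (hm : 0 < m) (N : ℕ) :
    eulerTrunc (ZMod 4) m N ^ 2 =
      eulerTrunc _ (2 * m) N * (1 + 2 * lambertTrunc (ZMod 4) m N) := by
  induction N with
  | zero => simp [eulerTrunc, lambertTrunc]
  | succ N ih =>
    have step := sq_one_sub_add_four_mul
      (one_sub_X_pow_mul_multiplesSeries (R := ZMod 4) (Nat.mul_pos hm N.succ_pos))
    rw [eulerTrunc, eulerTrunc, lambertTrunc, prod_range_succ, prod_range_succ, sum_range_succ]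
    rw [eulerTrunc, eulerTrunc, lambertTrunc] at ih
    have hx : ((X : (ZMod 4)⟦X⟧) ^ (m * (N + 1))) ^ 2 = X ^ (2 * m * (N + 1)) := by ring
    rw [hx] at step
    set x : (ZMod 4)⟦X⟧ := X ^ (m * (N + 1))
    set P₂ := ∏ j ∈ range N, (1 - (X : (ZMod 4)⟦X⟧) ^ (2 * m * (j + 1)))
    set D := ∑ j ∈ range N, multiplesSeries (ZMod 4) (m * (j + 1))
    set g := multiplesSeries (ZMod 4) (m * (N + 1))
    linear_combination (1 - x) ^ 2 * ih + P₂ * (1 + 2 * D) * step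
      + (P₂ * (1 - X ^ (2 * m * (N + 1))) * D * g - x * P₂ * (1 + 2 * D)) * four_eq_zero

theorem sum_divisors_filter_not_mul_self_eq {t : ℕ} (ht : t ≠ 0) :
    ∑ d ∈ t.divisors with ¬ d * d = t, (2 : ZMod 4) = 0 := by
  have hdiv : ∀ d ∈ t.divisors, d * (t / d) = t := fun d hd =>
    Nat.mul_div_cancel' (Nat.dvd_of_mem_divisors hd)
  refine sum_involution (fun d _ => t / d) (fun _ _ => by decide) ?_ ?_ ?_
  · intro d hd _ hfix
    simp only [mem_filter] at hd
    exact hd.2 (by nth_rw 2 [← hfix]; exact hdiv d hd.1)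
  · intro d hd
    simp only [mem_filter, Nat.mem_divisors] at hd ⊢
    refine ⟨⟨Nat.div_dvd_of_dvd hd.1.1, ht⟩, fun h => hd.2 ?_⟩
    have hcof := hdiv d (Nat.mem_divisors.mpr hd.1)
    have hpos : 0 < t / d := Nat.pos_of_ne_zero fun h0 => ht (by rw [← hcof, h0, mul_zero])
    have hself : t / d = d := Nat.eq_of_mul_eq_mul_right hpos (h.trans hcof.symm)
    rwa [hself] at hcof
  · intro d hd
    exact Nat.div_div_self (Nat.dvd_of_mem_divisors (mem_filter.mp hd).1) ht

open Classical in
theorem sum_divisors_two {t : ℕ} (ht : t ≠ 0) :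
    ∑ _ ∈ t.divisors, (2 : ZMod 4) = if ∃ k, t = k ^ 2 then 2 else 0 := by
  rw [← sum_filter_add_sum_filter_not t.divisors (fun d => d * d = t),
    sum_divisors_filter_not_mul_self_eq ht, add_zero]
  split_ifs with hsq
  · obtain ⟨k, rfl⟩ := hsq
    have hroot : {d ∈ (k ^ 2).divisors | d * d = k ^ 2} = {k} := by
      ext d
      simp only [mem_filter, Nat.mem_divisors, mem_singleton, ← sq]
      constructor
      · rintro ⟨-, h⟩
        exact Nat.pow_left_injective two_ne_zero h
      · rintro rfl
        exact ⟨⟨dvd_pow_self d two_ne_zero, ht⟩, rfl⟩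
    rw [hroot, sum_singleton]
  · refine sum_eq_zero fun d hd => absurd ⟨d, ?_⟩ hsq
    rw [sq, (mem_filter.mp hd).2]

open Classical in
theorem two_mul_coeff_lambertTrunc {m n N : ℕ} (hm : 0 < m) (hn : 0 < n) (hN : n ≤ N) :
    2 * coeff n (lambertTrunc (ZMod 4) m N) = if ∃ k, n = m * k ^ 2 then 2 else 0 := by
  simp only [lambertTrunc, map_sum, multiplesSeries, coeff_mk, hn, true_and, mul_sum, mul_ite,
    mul_one, mul_zero]
  rw [← sum_filter]
  by_cases hmn : m ∣ n
  · obtain ⟨t, rfl⟩ := hmn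
    have ht : t ≠ 0 := by rintro rfl; simp at hn
    have hdiv : ∀ j, m * (j + 1) ∣ m * t ↔ j + 1 ∣ t := fun j => Nat.mul_dvd_mul_iff_left hm
    have hsq : (∃ k, m * t = m * k ^ 2) ↔ ∃ k, t = k ^ 2 := by
      simp only [Nat.mul_left_cancel_iff hm]
    rw [if_congr hsq rfl rfl, ← sum_divisors_two ht]
    refine sum_nbij' (· + 1) (· - 1) ?_ ?_ ?_ ?_ (fun _ _ => rfl)
    · intro j hj
      simp only [mem_filter, mem_range, hdiv, Nat.mem_divisors] at hj ⊢
      exact ⟨hj.2, ht⟩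
    · intro d hd
      simp only [mem_filter, mem_range, hdiv, Nat.mem_divisors] at hd ⊢
      have hd₀ := Nat.pos_of_dvd_of_pos hd.1 (Nat.pos_of_ne_zero ht)
      have hdt := Nat.le_of_dvd (Nat.pos_of_ne_zero ht) hd.1
      have htN : t ≤ N := (Nat.le_mul_of_pos_left t hm).trans hN
      exact ⟨by omega, by rw [Nat.sub_add_cancel hd₀]; exact hd.1⟩
    · intro j _
      simp
    · intro d hd
      exact Nat.sub_add_cancel (Nat.pos_of_mem_divisors hd)
  · rw [if_neg fun ⟨k, hk⟩ => hmn ⟨k ^ 2, hk⟩]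
    exact sum_eq_zero fun j hj =>
      absurd (dvd_trans (dvd_mul_right m (j + 1)) (mem_filter.mp hj).2) hmn

open Classical in
noncomputable def squareSeries (R : Type*) [Semiring R] (m : ℕ) : R⟦X⟧ :=
  mk fun n => if 0 < n ∧ ∃ k, n = m * k ^ 2 then 1 else 0

theorem truncMod_two_mul_lambertTrunc {m : ℕ} (hm : 0 < m) (N : ℕ) :
    truncMod N (2 * lambertTrunc (ZMod 4) m N) = truncMod N (2 * squareSeries (ZMod 4) m) := by
  classical
  refine truncMod_eq_iff.mpr fun i hi => ?_
  rw [coeff_two_mul, coeff_two_mul, squareSeries, coeff_mk]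
  rcases Nat.eq_zero_or_pos i with rfl | hi₀
  · simp [lambertTrunc, multiplesSeries]
  · rw [two_mul_coeff_lambertTrunc hm hi₀ hi]
    simp [hi₀]

local notation "ρ" => Int.castRingHom (ZMod 4)

theorem map_eulerProd_sq {m : ℕ} (hm : 0 < m) :
    map ρ (eulerProd m) ^ 2 = map ρ (eulerProd (2 * m)) * (1 + 2 * squareSeries (ZMod 4) m) := by
  ext n
  refine truncMod_eq_iff.mp ?_ n le_rfl
  rw [map_pow, truncMod_map_eulerProd _ hm, ← map_pow, eulerTrunc_sq hm, map_mul, map_mul,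
    map_add, map_add, truncMod_two_mul_lambertTrunc hm, truncMod_map_eulerProd _ (by omega)]

theorem one_add_two_mul_pow (F : (ZMod 4)⟦X⟧) (k : ℕ) : (1 + 2 * F) ^ k = 1 + 2 * (k * F) := by
  induction k with
  | zero => simp
  | succ k ih =>
    rw [pow_succ, ih]
    push_cast
    linear_combination k * F ^ 2 * four_eq_zero

theorem isUnit_map_eulerProd (m : ℕ) : IsUnit (map ρ (eulerProd m)) := by
  rw [isUnit_iff_constantCoeff, ← coeff_zero_eq_constantCoeff_apply]
  simp [eulerProd]

theorem map_mk_eq_of_overcubic {c : ℕ} (hc : 1 ≤ c) {a : ℕ → ℤ}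
    (ha : mk a * eulerProd 1 ^ 2 * eulerProd 2 ^ (2 * c) =
      eulerProd 4 ^ (c - 1) * eulerProd 2 ^ 3) :
    map ρ (mk a) =
      (1 + 2 * squareSeries (ZMod 4) 1) * (1 + 2 * squareSeries (ZMod 4) 2) ^ (c + 1) := by
  obtain ⟨d, rfl⟩ := Nat.exists_eq_add_of_le' hc
  set A := map ρ (mk a)
  set E₂ := map ρ (eulerProd 2)
  set E₄ := map ρ (eulerProd 4)
  set T₁ := 1 + 2 * squareSeries (ZMod 4) 1
  set T₂ := 1 + 2 * squareSeries (ZMod 4) 2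
  have hE₁ : map ρ (eulerProd 1) ^ 2 = E₂ * T₁ := map_eulerProd_sq one_pos
  have hE₂ : E₂ ^ 2 = E₄ * T₂ := map_eulerProd_sq two_pos
  have hT₁ : T₁ ^ 2 = 1 := by
    rw [one_add_two_mul_pow]; linear_combination squareSeries (ZMod 4) 1 * four_eq_zero
  have hT₂ : T₂ ^ (2 * (d + 1)) = 1 := by
    rw [one_add_two_mul_pow]; push_cast
    linear_combination (d + 1) * squareSeries (ZMod 4) 2 * four_eq_zero
  have H := congrArg (map ρ) ha
  simp only [map_mul, map_pow, Nat.add_sub_cancel] at H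
  rw [hE₁, pow_mul, hE₂, mul_pow] at H
  have hcancel : (A * T₁ * T₂ ^ (d + 1)) * (E₂ * E₄ ^ (d + 1)) = T₂ * (E₂ * E₄ ^ (d + 1)) := by
    linear_combination H + E₂ * E₄ ^ d * hE₂
  have hkey : A * T₁ * T₂ ^ (d + 1) = T₂ :=
    ((isUnit_map_eulerProd 2).mul ((isUnit_map_eulerProd 4).pow _)).mul_right_cancel hcancel
  linear_combination (-A) * hT₂ - A * T₂ ^ (2 * (d + 1)) * hT₁ + T₁ * T₂ ^ (d + 1) * hkey

open Classical in
theorem intCast_eq_of_overcubic {c : ℕ} (hc : 1 ≤ c) {a : ℕ → ℤ}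
    (ha : mk a * eulerProd 1 ^ 2 * eulerProd 2 ^ (2 * c) =
      eulerProd 4 ^ (c - 1) * eulerProd 2 ^ 3)
    {n : ℕ} (hn : 0 < n) :
    (a n : ZMod 4) = (if ∃ k, n = k ^ 2 then 2 else 0)
      + if ∃ k, n = 2 * k ^ 2 then 2 * ((c : ZMod 4) + 1) else 0 := by
  have hprod : (1 + 2 * squareSeries (ZMod 4) 1) * (1 + 2 * squareSeries (ZMod 4) 2) ^ (c + 1)
      = 1 + 2 * squareSeries (ZMod 4) 1 + 2 * (((c + 1 : ℕ) : (ZMod 4)⟦X⟧) * squareSeries _ 2) := by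
    rw [one_add_two_mul_pow]
    linear_combination ((c + 1 : ℕ) : (ZMod 4)⟦X⟧) * squareSeries (ZMod 4) 1 * squareSeries _ 2
      * four_eq_zero
  have h := congrArg (coeff n) (map_mk_eq_of_overcubic hc ha)
  rw [coeff_map, coeff_mk, hprod, map_add, map_add, coeff_one, if_neg hn.ne', coeff_two_mul,
    coeff_two_mul, coeff_natCast_mul, squareSeries, squareSeries, coeff_mk, coeff_mk,
    eq_intCast] at h
  rw [h]
  simp only [hn, true_and, one_mul]
  split_ifs <;> push_cast <;> ring

theorem sq_ne_two_mul_sq {k j : ℕ} (hj : j ≠ 0) : k ^ 2 ≠ 2 * j ^ 2 := by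
  intro h
  have := congrArg (padicValNat 2) h
  rw [padicValNat.pow, padicValNat.mul two_ne_zero (pow_ne_zero 2 hj), padicValNat.pow,
    padicValNat_self] at this
  omega

end Overcubic

open Overcubic in
/-- Congruences modulo 4 for generalized overcubic partitions: if `a` is the
counting function of generalized overcubic partitions with c ≥ 1 colors,
determined by Σ a(n) qⁿ = f₄^{c-1} / (f₁² f₂^{2c-3}) (cleared of denominators:
(Σ a(n) qⁿ) · f₁² · f₂^{2c} = f₄^{c-1} · f₂³), then for positive n:
a(n) ≡ 2 (mod 4) if n is a square, a(n) ≡ 2(c+1) (mod 4) if n is twice a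
square, and a(n) ≡ 0 (mod 4) otherwise. -/
theorem stmt_11 (c : ℕ) (hc : 1 ≤ c) (a : ℕ → ℤ)
    (ha : PowerSeries.mk a * eulerProd 1 ^ 2 * eulerProd 2 ^ (2 * c) =
      eulerProd 4 ^ (c - 1) * eulerProd 2 ^ 3) :
    ∀ n : ℕ, 0 < n →
      ((∃ k : ℕ, n = k ^ 2) → a n ≡ 2 [ZMOD 4]) ∧
      ((∃ k : ℕ, n = 2 * k ^ 2) → a n ≡ 2 * ((c : ℤ) + 1) [ZMOD 4]) ∧
      ((¬ ∃ k : ℕ, n = k ^ 2) → (¬ ∃ k : ℕ, n = 2 * k ^ 2) → a n ≡ 0 [ZMOD 4]) := by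
  intro n hn
  have hval := intCast_eq_of_overcubic hc ha hn
  have hdisj : (∃ k : ℕ, n = k ^ 2) → ¬ ∃ k : ℕ, n = 2 * k ^ 2 := by
    rintro ⟨k, rfl⟩ ⟨j, hj⟩
    exact sq_ne_two_mul_sq (by rintro rfl; simp_all) hj
  have hmod (b : ℤ) (h : (a n : ZMod 4) = b) : a n ≡ b [ZMOD 4] :=
    (ZMod.intCast_eq_intCast_iff _ _ 4).mp h
  refine ⟨fun hsq => hmod _ ?_, fun htw => hmod _ ?_, fun hsq htw => hmod _ ?_⟩
  · simp [hval, hsq, hdisj hsq]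
  · have hsq : ¬ ∃ k : ℕ, n = k ^ 2 := fun hsq => hdisj hsq htw
    simp [hval, htw, hsq]
  · simp [hval, hsq, htw]
end

section
/- For every positive integer n, ̄a_c(n) is even; that is, the number of generalized overcubic partitions of n is divisible by 2 for all c ≥ 1. -/
/-!
Reduce the generating-function identity mod 2. In characteristic 2 the Frobenius gives
`f_m ^ 2 ≡ f_{2m}`, so `f_1^2 f_2^{2c} ≡ f_2 f_4^c ≡ f_4^{c-1} f_2^3`, and since the `f_m` are units
the generating function of `a` is `≡ 1 (mod 2)`.
-/

open PowerSeries

open Finset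

theorem PowerSeries.coeff_eq_of_smodEq_span_X_pow {R : Type*} [CommRing R] {f g : R⟦X⟧}
    {n k : ℕ} (h : f ≡ g [SMOD Ideal.span {(X : R⟦X⟧) ^ n}]) (hk : k < n) :
    coeff k f = coeff k g := by
  rw [SModEq.sub_mem, Ideal.mem_span_singleton, X_pow_dvd_iff] at h
  exact sub_eq_zero.mp (by simpa only [map_sub] using h k hk)

section EulerPartialProd

variable (R : Type*) [CommRing R]

noncomputable def eulerPartialProd (m N : ℕ) : R⟦X⟧ :=
  ∏ j ∈ range N, (1 - X ^ (m * (j + 1)))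

variable {R}

theorem eulerPartialProd_smodEq {m n N : ℕ} (hm : 1 ≤ m) (hnN : n ≤ N) :
    eulerPartialProd R m N ≡ eulerPartialProd R m n [SMOD Ideal.span {(X : R⟦X⟧) ^ (n + 1)}] := by
  have hfactor : ∀ j ∈ Ico n N,
      (1 - X ^ (m * (j + 1)) : R⟦X⟧) ≡ 1 [SMOD Ideal.span {(X : R⟦X⟧) ^ (n + 1)}] := by
    intro j hj
    have hdeg : n + 1 ≤ m * (j + 1) :=
      (Nat.succ_le_succ (mem_Ico.mp hj).1).trans (Nat.le_mul_of_pos_left _ hm)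
    rw [SModEq.sub_mem, sub_sub_cancel_left, neg_mem_iff, Ideal.mem_span_singleton]
    exact pow_dvd_pow X hdeg
  have htail := SModEq.prod hfactor
  rw [prod_const_one] at htail
  unfold eulerPartialProd
  rw [← prod_range_mul_prod_Ico _ hnN]
  simpa only [mul_one] using SModEq.mul SModEq.rfl htail

theorem coeff_map_eulerProd {m n N : ℕ} (hm : 1 ≤ m) (hnN : n ≤ N) :
    coeff n ((eulerProd m).map (Int.castRingHom R)) = coeff n (eulerPartialProd R m N) := by
  have hn : coeff n ((eulerProd m).map (Int.castRingHom R)) = coeff n (eulerPartialProd R m n) := by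
    rw [eulerProd, coeff_map, coeff_mk, ← coeff_map, map_prod]
    simp [eulerPartialProd]
  rw [hn, coeff_eq_of_smodEq_span_X_pow (eulerPartialProd_smodEq hm hnN) n.lt_succ_self]

theorem map_eulerProd_smodEq {m : ℕ} (hm : 1 ≤ m) (n : ℕ) :
    (eulerProd m).map (Int.castRingHom R) ≡ eulerPartialProd R m n
      [SMOD Ideal.span {(X : R⟦X⟧) ^ (n + 1)}] := by
  rw [SModEq.sub_mem, Ideal.mem_span_singleton, X_pow_dvd_iff]
  intro k hk
  rw [map_sub, coeff_map_eulerProd hm (Nat.lt_succ_iff.mp hk), sub_self]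

theorem eulerPartialProd_pow_char (p : ℕ) [Fact p.Prime] [CharP R p] (m N : ℕ) :
    eulerPartialProd R m N ^ p = eulerPartialProd R (p * m) N := by
  have : CharP R⟦X⟧ p := charP_of_injective_ringHom C_injective p
  simp only [eulerPartialProd, ← prod_pow, sub_pow_char, one_pow, ← pow_mul]
  exact prod_congr rfl fun j _ => by ring_nf

theorem map_eulerProd_pow_char (p : ℕ) [Fact p.Prime] [CharP R p] {m : ℕ} (hm : 1 ≤ m) :
    (eulerProd m).map (Int.castRingHom R) ^ p = (eulerProd (p * m)).map (Int.castRingHom R) := by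
  have hpm : 1 ≤ p * m := Nat.mul_pos (Fact.out : p.Prime).pos hm
  ext n
  refine coeff_eq_of_smodEq_span_X_pow ?_ n.lt_succ_self
  have hfrob := (map_eulerProd_smodEq (R := R) hm n).pow p
  rw [eulerPartialProd_pow_char] at hfrob
  exact hfrob.trans (map_eulerProd_smodEq hpm n).symm

theorem isUnit_map_eulerProd (m : ℕ) : IsUnit ((eulerProd m).map (Int.castRingHom R)) := by
  rw [isUnit_iff_constantCoeff, ← coeff_zero_eq_constantCoeff_apply]
  simp [eulerProd]

end EulerPartialProd

theorem stmt_12_general (c : ℕ) (hc : 1 ≤ c) (a : ℕ → ℤ)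
    (ha : PowerSeries.mk a * eulerProd 1 ^ 2 * eulerProd 2 ^ (2 * c) =
      eulerProd 4 ^ (c - 1) * eulerProd 2 ^ 3) :
    ∀ n : ℕ, 0 < n → (2 : ℤ) ∣ a n := by
  set E : ℕ → (ZMod 2)⟦X⟧ := fun m => (eulerProd m).map (Int.castRingHom (ZMod 2))
  set A := (PowerSeries.mk a).map (Int.castRingHom (ZMod 2))
  have h12 : E 1 ^ 2 = E 2 := map_eulerProd_pow_char 2 le_rfl
  have h24 : E 2 ^ 2 = E 4 := map_eulerProd_pow_char 2 (by norm_num)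
  have hmod : A * (E 2 * E 4 ^ c) = 1 * (E 2 * E 4 ^ c) := by
    have hmap := congrArg (PowerSeries.map (Int.castRingHom (ZMod 2))) ha
    obtain ⟨d, rfl⟩ := Nat.exists_eq_add_of_le' hc
    simp only [map_mul, map_pow, Nat.add_sub_cancel, pow_mul] at hmap
    calc A * (E 2 * E 4 ^ (d + 1)) = A * E 1 ^ 2 * (E 2 ^ 2) ^ (d + 1) := by rw [h12, h24]; ring
      _ = E 4 ^ d * E 2 ^ 3 := hmap
      _ = 1 * (E 2 * E 4 ^ (d + 1)) := by rw [← h24]; ring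
  have hA : A = 1 :=
    ((isUnit_map_eulerProd 2).mul ((isUnit_map_eulerProd 4).pow c)).mul_right_cancel hmod
  intro n hn
  have hcoeff := congrArg (coeff n) hA
  rw [coeff_map, coeff_mk, coeff_one, if_neg hn.ne'] at hcoeff
  exact (ZMod.intCast_zmod_eq_zero_iff_dvd (a n) 2).mp hcoeff

/-- For every positive integer n and every c ≥ 1, the number of generalized
overcubic partitions of n is even, where the counting function `a` is
determined by the generating function Σ a(n) qⁿ = f₄^{c-1} / (f₁² f₂^{2c-3})
(cleared of denominators). -/
theorem stmt_12 (c : ℕ) (hc : 1 ≤ c) (a : ℕ → ℤ) (ha0 : a 0 = 1)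
    (ha : PowerSeries.mk a * eulerProd 1 ^ 2 * eulerProd 2 ^ (2 * c) =
      eulerProd 4 ^ (c - 1) * eulerProd 2 ^ 3) :
    ∀ n : ℕ, 0 < n → (2 : ℤ) ∣ a n :=
  stmt_12_general c hc a ha
end

section
/- For all n ≥ 0 and i ≥ 1, ̄a_{3i+2}(3n+2) ≡ 0 (mod 6), where ̄a_c(n) is the number of generalized overcubic partitions of n with c colors for even parts. -/
/-!
Mod 2, the congruences f₁² ≡ f₂ and f₂² ≡ f₄ turn the defining relation into ā ≡ 1, so every
ā(n) with n ≥ 1 is even.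

Mod 3, f_m³ ≡ f_{3m} turns it into ā ≡ f₁₂^i / (f₃ f₆^{2i}) · f₁f₄/f₂: a series in q³ times
f₁f₄/f₂ = (q;q²)∞ (q⁴;q⁴)∞. By Gauss' identity the latter equals Σ_{k ∈ ℤ} (-1)^k q^{k(2k-1)},
and k(2k-1) is never ≡ 2 (mod 3). Gauss' identity is the limit n → ∞ of the finite triple product
∏_{j<2n} (1 - q^{2j+1}) = Σ_{r ≤ 2n} (-1)^{n+r} q^{k(2k-1)} [2n choose r]_{q⁴} (k = r - n),
because [k+l choose k]_{q⁴} · f₄ ≡ 1 modulo q^{4 min(k,l) + 4}.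
-/

open PowerSeries

open Filter (Tendsto atTop eventually_ge_atTop tendsto_id)
open Topology Finset
open scoped PowerSeries.WithPiTopology

theorem coeff_eq_of_X_pow_dvd_sub {R : Type*} [CommRing R] {f g : R⟦X⟧} {d k : ℕ}
    (h : (X : R⟦X⟧) ^ d ∣ f - g) (hk : k < d) : coeff k f = coeff k g := by
  simpa [sub_eq_zero] using X_pow_dvd_iff.mp h k hk

section Topology

variable {R : Type*} [CommRing R] [TopologicalSpace R]

theorem tendsto_of_X_pow_dvd_sub {ι : Type*} {l : Filter ι} {F : ι → R⟦X⟧} {L : R⟦X⟧}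
    (h : ∀ d, ∀ᶠ i in l, (X : R⟦X⟧) ^ d ∣ F i - L) : Tendsto F l (𝓝 L) := by
  rw [WithPiTopology.tendsto_iff_coeff_tendsto]
  intro d
  refine tendsto_nhds_of_eventually_eq ?_
  filter_upwards [h (d + 1)] with i hi
  exact coeff_eq_of_X_pow_dvd_sub hi d.lt_add_one

theorem Filter.Tendsto.powerSeries_map [DiscreteTopology R] {S : Type*} [CommRing S]
    [TopologicalSpace S] {ι : Type*} {l : Filter ι} {F : ι → R⟦X⟧} {L : R⟦X⟧}
    (h : Tendsto F l (𝓝 L)) (φ : R →+* S) :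
    Tendsto (fun i ↦ PowerSeries.map φ (F i)) l (𝓝 (PowerSeries.map φ L)) := by
  rw [WithPiTopology.tendsto_iff_coeff_tendsto] at h ⊢
  intro d
  simp only [coeff_map]
  exact (continuous_of_discreteTopology.tendsto _).comp (h d)

theorem Filter.Tendsto.powerSeries_expand {ι : Type*} {l : Filter ι} {F : ι → R⟦X⟧} {L : R⟦X⟧}
    (h : Tendsto F l (𝓝 L)) (p : ℕ) (hp : p ≠ 0) :
    Tendsto (fun i ↦ expand p hp (F i)) l (𝓝 (expand p hp L)) := by
  rw [WithPiTopology.tendsto_iff_coeff_tendsto] at h ⊢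
  intro d
  simp only [coeff_expand]
  split_ifs
  · exact h _
  · exact tendsto_const_nhds

end Topology

section Products

variable {R : Type*} [CommRing R]

noncomputable def prodOneSubXPow (e : ℕ → ℕ) : R⟦X⟧ :=
  mk fun n ↦ coeff n (∏ j ∈ range n, (1 - X ^ e j))

theorem X_pow_dvd_prod_range_sub {e : ℕ → ℕ} {d N n : ℕ} (hNn : N ≤ n)
    (he : ∀ j, N ≤ j → d ≤ e j) :
    (X : R⟦X⟧) ^ d ∣ ∏ j ∈ range n, (1 - X ^ e j) - ∏ j ∈ range N, (1 - X ^ e j) := by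
  induction n, hNn using Nat.le_induction with
  | base => simp
  | succ n hNn ih =>
    rw [prod_range_succ, mul_one_sub, sub_right_comm]
    exact dvd_sub ih (dvd_mul_of_dvd_right (pow_dvd_pow X (he n hNn)) _)

theorem X_pow_dvd_prodOneSubXPow_sub {e : ℕ → ℕ} (he : ∀ j, j < e j) {d n : ℕ}
    (hd : ∀ j, n ≤ j → d ≤ e j) :
    (X : R⟦X⟧) ^ d ∣ prodOneSubXPow e - ∏ j ∈ range n, (1 - X ^ e j) := by
  refine X_pow_dvd_iff.mpr fun k hk ↦ ?_
  rw [map_sub, sub_eq_zero, prodOneSubXPow, coeff_mk]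
  rcases le_total k n with hkn | hnk
  · exact (coeff_eq_of_X_pow_dvd_sub
      (X_pow_dvd_prod_range_sub hkn fun j hj ↦ (he j).trans_le' (by omega)) k.lt_add_one).symm
  · exact coeff_eq_of_X_pow_dvd_sub (X_pow_dvd_prod_range_sub hnk hd) hk

theorem tendsto_prod_range_prodOneSubXPow [TopologicalSpace R] {e : ℕ → ℕ} (he : ∀ j, j < e j) :
    Tendsto (fun n ↦ ∏ j ∈ range n, (1 - X ^ e j : R⟦X⟧)) atTop (𝓝 (prodOneSubXPow e)) := by
  refine tendsto_of_X_pow_dvd_sub fun d ↦ ?_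
  filter_upwards [eventually_ge_atTop d] with n hn
  rw [← dvd_neg, neg_sub]
  exact X_pow_dvd_prodOneSubXPow_sub he fun j hj ↦ (he j).le.trans' (by omega)

end Products

theorem X_pow_dvd_eulerProd_sub {m : ℕ} (hm : 0 < m) (n : ℕ) :
    (X : ℤ⟦X⟧) ^ (m * (n + 1)) ∣ eulerProd m - ∏ j ∈ range n, (1 - X ^ (m * (j + 1))) :=
  X_pow_dvd_prodOneSubXPow_sub (fun j ↦ by nlinarith) fun j hj ↦ by gcongr

theorem tendsto_prod_range_eulerProd {m : ℕ} (hm : 0 < m) :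
    Tendsto (fun n ↦ ∏ j ∈ range n, (1 - X ^ (m * (j + 1)) : ℤ⟦X⟧)) atTop (𝓝 (eulerProd m)) :=
  tendsto_prod_range_prodOneSubXPow fun j ↦ by nlinarith

theorem constantCoeff_eulerProd (m : ℕ) : constantCoeff (eulerProd m) = 1 := by
  simp [eulerProd, ← coeff_zero_eq_constantCoeff_apply]

section GaussBinom

variable {R : Type*} [CommRing R] (t : R)

def gaussBinom : ℕ → ℕ → R
  | _, 0 => 1
  | 0, _ + 1 => 0
  | m + 1, k + 1 => gaussBinom m k + t ^ (k + 1) * gaussBinom m (k + 1)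

def qPochhammer (n : ℕ) : R := ∏ j ∈ range n, (1 - t ^ (j + 1))

theorem qPochhammer_succ (n : ℕ) : qPochhammer t (n + 1) = qPochhammer t n * (1 - t ^ (n + 1)) :=
  prod_range_succ _ _

@[simp]
theorem gaussBinom_zero_right (m : ℕ) : gaussBinom t m 0 = 1 := by
  cases m <;> rfl

theorem gaussBinom_succ_succ (m k : ℕ) :
    gaussBinom t (m + 1) (k + 1) = gaussBinom t m k + t ^ (k + 1) * gaussBinom t m (k + 1) :=
  rfl

theorem gaussBinom_eq_zero_of_lt {m k : ℕ} (h : m < k) : gaussBinom t m k = 0 := by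
  induction m generalizing k with
  | zero => obtain ⟨k, rfl⟩ := Nat.exists_eq_add_one.mpr h; rfl
  | succ m ih =>
    obtain ⟨k, rfl⟩ := Nat.exists_eq_add_one.mpr (m.zero_lt_succ.trans h)
    rw [gaussBinom_succ_succ, ih (by omega), ih (by omega), mul_zero, add_zero]

@[simp]
theorem gaussBinom_self (m : ℕ) : gaussBinom t m m = 1 := by
  induction m with
  | zero => rfl
  | succ m ih =>
    rw [gaussBinom_succ_succ, ih, gaussBinom_eq_zero_of_lt t m.lt_add_one, mul_zero, add_zero]

theorem gaussBinom_succ_succ' {m k : ℕ} (hk : k ≤ m) :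
    gaussBinom t (m + 1) (k + 1) = t ^ (m - k) * gaussBinom t m k + gaussBinom t m (k + 1) := by
  induction m generalizing k with
  | zero =>
    obtain rfl : k = 0 := by omega
    simp [gaussBinom_eq_zero_of_lt]
  | succ m ih =>
    rcases k with _ | k
    · have h := ih (Nat.zero_le m)
      have hP := gaussBinom_succ_succ t m 0
      rw [gaussBinom_succ_succ]
      simp only [gaussBinom_zero_right, zero_add, Nat.sub_zero, mul_one, pow_one] at *
      linear_combination t * h - hP
    rcases hk.lt_or_eq with hk | hk
    · obtain ⟨l, rfl⟩ : ∃ l, m = k + l + 1 := ⟨m - k - 1, by omega⟩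
      have i1 := ih (k := k) (by omega)
      have i2 := ih (k := k + 1) (by omega)
      rw [show k + l + 1 - k = l + 1 by omega] at i1
      rw [show k + l + 1 - (k + 1) = l by omega] at i2
      rw [gaussBinom_succ_succ t (k + l + 1 + 1), show k + l + 1 + 1 - (k + 1) = l + 1 by omega]
      linear_combination i1 + t ^ (k + 1 + 1) * i2
        - t ^ (l + 1) * gaussBinom_succ_succ t (k + l + 1) k
        - gaussBinom_succ_succ t (k + l + 1) (k + 1)
    · obtain rfl : k = m := by omega
      simp [gaussBinom_eq_zero_of_lt]

theorem gaussBinom_add_two {m j : ℕ} (hj : j ≤ m) :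
    gaussBinom t (m + 2) (j + 2) = t ^ (m - j) * gaussBinom t m j
      + (1 + t ^ (m + 1)) * gaussBinom t m (j + 1) + t ^ (j + 2) * gaussBinom t m (j + 2) := by
  rw [gaussBinom_succ_succ' t (by omega : j + 1 ≤ m + 1), gaussBinom_succ_succ,
    gaussBinom_succ_succ, show m + 1 - (j + 1) = m - j by omega]
  have : t ^ (m - j) * t ^ (j + 1) = t ^ (m + 1) := by rw [← pow_add]; congr 1; omega
  linear_combination gaussBinom t m (j + 1) * this

theorem gaussBinom_add_two_one (m : ℕ) :
    gaussBinom t (m + 2) 1 = 1 + t ^ (m + 1) + t * gaussBinom t m 1 := by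
  rw [gaussBinom_succ_succ' t (Nat.zero_le _), gaussBinom_succ_succ]
  simp only [gaussBinom_zero_right, Nat.sub_zero, zero_add, pow_one]
  ring

theorem gaussBinom_mul_qPochhammer (k l : ℕ) :
    gaussBinom t (k + l) k * qPochhammer t k * qPochhammer t l = qPochhammer t (k + l) := by
  induction k generalizing l with
  | zero => simp [qPochhammer]
  | succ k ih =>
    induction l with
    | zero => simp [qPochhammer]
    | succ l ihl =>
      have h := ih (l + 1)
      rw [show k + (l + 1) = k + l + 1 by omega, qPochhammer_succ t l] at h
      rw [show k + 1 + l = k + l + 1 by omega, qPochhammer_succ t k] at ihl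
      rw [show k + 1 + (l + 1) = k + l + 1 + 1 by omega, gaussBinom_succ_succ, qPochhammer_succ t k,
        qPochhammer_succ t l, qPochhammer_succ t (k + l + 1)]
      linear_combination (1 - t ^ (k + 1)) * h + t ^ (k + 1) * (1 - t ^ (l + 1)) * ihl

end GaussBinom

def thetaExp (k : ℤ) : ℕ := (k * (2 * k - 1)).toNat

theorem natCast_thetaExp (k : ℤ) : (thetaExp k : ℤ) = k * (2 * k - 1) :=
  Int.toNat_of_nonneg (by rcases le_or_gt k 0 with h | h <;> nlinarith)

theorem natCast_thetaExp_add_one (k : ℤ) : (thetaExp (k + 1) : ℤ) = thetaExp k + 4 * k + 1 := by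
  rw [natCast_thetaExp, natCast_thetaExp]; ring

theorem natAbs_le_thetaExp (k : ℤ) : k.natAbs ≤ thetaExp k := by
  zify
  rw [natCast_thetaExp]
  rcases le_or_gt k 0 with h | h
  · rw [abs_of_nonpos h]; nlinarith
  · rw [abs_of_pos h]; nlinarith

theorem thetaExp_mod_three_ne_two (k : ℤ) : thetaExp k % 3 ≠ 2 := by
  intro h
  have hk : ((thetaExp k : ℤ) : ZMod 3) = 2 := by
    rw [Int.cast_natCast, ← ZMod.natCast_mod, h]; rfl
  rw [natCast_thetaExp] at hk
  push_cast at hk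
  generalize (k : ZMod 3) = x at hk
  revert x; decide

section FiniteTripleProduct

variable {R : Type*} [CommRing R] (x : R)

def jacobiTerm (n r : ℕ) : R :=
  (-1) ^ (n + r) * x ^ thetaExp (r - n) * gaussBinom (x ^ 4) (2 * n) r

theorem jacobiTerm_eq_zero {n r : ℕ} (h : 2 * n < r) : jacobiTerm x n r = 0 := by
  rw [jacobiTerm, gaussBinom_eq_zero_of_lt _ h, mul_zero]

theorem jacobiTerm_succ_add_two {n j : ℕ} (hj : j ≤ 2 * n) :
    jacobiTerm x (n + 1) (j + 2) = -x ^ (4 * n + 1) * jacobiTerm x n j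
      + (1 + x ^ (8 * n + 4)) * jacobiTerm x n (j + 1)
      - x ^ (4 * n + 3) * jacobiTerm x n (j + 2) := by
  set k : ℤ := j - n
  have e0 : ((j + 2 : ℕ) : ℤ) - (n + 1 : ℕ) = k + 1 := by push_cast; ring
  have e1 : ((j + 1 : ℕ) : ℤ) - n = k + 1 := by push_cast; ring
  have e2 : ((j + 2 : ℕ) : ℤ) - n = k + 1 + 1 := by push_cast; ring
  have h1 := natCast_thetaExp_add_one k
  have h2 := natCast_thetaExp_add_one (k + 1)
  have p1 : x ^ thetaExp (k + 1) * (x ^ 4) ^ (2 * n - j) = x ^ (4 * n + 1) * x ^ thetaExp k := by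
    rw [← pow_mul, ← pow_add, ← pow_add]; congr 1; omega
  have p2 : x ^ thetaExp (k + 1) * (x ^ 4) ^ (j + 2)
      = x ^ (4 * n + 3) * x ^ thetaExp (k + 1 + 1) := by
    rw [← pow_mul, ← pow_add, ← pow_add]; congr 1; omega
  have p3 : x ^ thetaExp (k + 1) * (x ^ 4) ^ (2 * n + 1)
      = x ^ (8 * n + 4) * x ^ thetaExp (k + 1) := by
    rw [← pow_mul, ← pow_add, ← pow_add]; congr 1; omega
  simp only [jacobiTerm, e0, e1, e2, show 2 * (n + 1) = 2 * n + 2 by ring,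
    gaussBinom_add_two _ hj]
  linear_combination (-1) ^ (n + j + 1) * (gaussBinom (x ^ 4) (2 * n) j * p1
    + gaussBinom (x ^ 4) (2 * n) (j + 2) * p2 + gaussBinom (x ^ 4) (2 * n) (j + 1) * p3)

theorem jacobiTerm_succ_one (n : ℕ) :
    jacobiTerm x (n + 1) 1 = (1 + x ^ (8 * n + 4)) * jacobiTerm x n 0
      - x ^ (4 * n + 3) * jacobiTerm x n 1 := by
  set k : ℤ := -n
  have e0 : ((1 : ℕ) : ℤ) - (n + 1 : ℕ) = k := by push_cast; ring
  have e1 : ((0 : ℕ) : ℤ) - n = k := by push_cast; ring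
  have e2 : ((1 : ℕ) : ℤ) - n = k + 1 := by push_cast; ring
  have h := natCast_thetaExp_add_one k
  have p : x ^ thetaExp k * x ^ 4 = x ^ (4 * n + 3) * x ^ thetaExp (k + 1) := by
    rw [← pow_add, ← pow_add]; congr 1; omega
  simp only [jacobiTerm, e0, e1, e2, show 2 * (n + 1) = 2 * n + 2 by ring, gaussBinom_add_two_one,
    gaussBinom_zero_right]
  linear_combination (-1) ^ n * gaussBinom (x ^ 4) (2 * n) 1 * p

theorem jacobiTerm_succ_zero (n : ℕ) :
    jacobiTerm x (n + 1) 0 = -x ^ (4 * n + 3) * jacobiTerm x n 0 := by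
  set k : ℤ := -n
  have e0 : ((0 : ℕ) : ℤ) - (n + 1 : ℕ) = k - 1 := by push_cast; ring
  have e1 : ((0 : ℕ) : ℤ) - n = k := by push_cast; ring
  have h := natCast_thetaExp_add_one (k - 1)
  rw [sub_add_cancel] at h
  have p : x ^ thetaExp (k - 1) = x ^ (4 * n + 3) * x ^ thetaExp k := by
    rw [← pow_add]; congr 1; omega
  simp only [jacobiTerm, e0, e1, gaussBinom_zero_right, p]
  ring

theorem sum_jacobiTerm_succ (n : ℕ) :
    ∑ r ∈ range (2 * (n + 1) + 1), jacobiTerm x (n + 1) r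
      = (1 - x ^ (4 * n + 1)) * (1 - x ^ (4 * n + 3))
        * ∑ r ∈ range (2 * n + 1), jacobiTerm x n r := by
  set S := ∑ r ∈ range (2 * n + 1), jacobiTerm x n r
  have hS : ∀ M, 2 * n + 1 ≤ M → ∑ r ∈ range M, jacobiTerm x n r = S := fun M hM ↦
    eventually_constant_sum (fun r hr ↦ jacobiTerm_eq_zero x (by omega)) hM
  have h1 : ∑ j ∈ range (2 * n + 1), jacobiTerm x n (j + 1) = S - jacobiTerm x n 0 := by
    rw [eq_sub_iff_add_eq, ← sum_range_succ', hS _ (by omega)]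
  have h2 : ∑ j ∈ range (2 * n + 1), jacobiTerm x n (j + 2)
      = S - jacobiTerm x n 0 - jacobiTerm x n 1 := by
    rw [eq_sub_iff_add_eq, eq_sub_iff_add_eq, ← sum_range_succ' (fun j ↦ jacobiTerm x n (j + 1)),
      ← sum_range_succ', hS _ (by omega)]
  rw [show 2 * (n + 1) + 1 = 2 * n + 1 + 1 + 1 by ring, sum_range_succ', sum_range_succ',
    sum_congr rfl fun j hj ↦ jacobiTerm_succ_add_two x (Nat.lt_succ_iff.mp (mem_range.mp hj)),
    jacobiTerm_succ_one, jacobiTerm_succ_zero]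
  simp only [sum_add_distrib, sum_sub_distrib, ← mul_sum, h1, h2]
  ring

theorem prod_one_sub_pow_odd_eq_sum_jacobiTerm (n : ℕ) :
    ∏ j ∈ range (2 * n), (1 - x ^ (2 * j + 1)) = ∑ r ∈ range (2 * n + 1), jacobiTerm x n r := by
  induction n with
  | zero => simp [jacobiTerm, thetaExp]
  | succ n ih =>
    rw [sum_jacobiTerm_succ, ← ih, show 2 * (n + 1) = 2 * n + 1 + 1 by ring, prod_range_succ,
      prod_range_succ, show 2 * (2 * n) + 1 = 4 * n + 1 by ring,
      show 2 * (2 * n + 1) + 1 = 4 * n + 3 by ring]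
    ring

end FiniteTripleProduct

theorem eulerProd_one_eq_mul : eulerProd 1 = prodOneSubXPow (2 * · + 1) * eulerProd 2 := by
  have hsplit : ∀ n, ∏ j ∈ range (2 * n), (1 - X ^ (1 * (j + 1)) : ℤ⟦X⟧)
      = (∏ j ∈ range n, (1 - X ^ (2 * j + 1))) * ∏ j ∈ range n, (1 - X ^ (2 * (j + 1))) := by
    intro n
    induction n with
    | zero => simp
    | succ n ih =>
      rw [show 2 * (n + 1) = 2 * n + 1 + 1 by ring, prod_range_succ, prod_range_succ, ih,
        prod_range_succ, prod_range_succ]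
      ring_nf
  have h2n : Tendsto (2 * ·) atTop atTop := tendsto_id.const_mul_atTop' two_pos
  refine tendsto_nhds_unique ((tendsto_prod_range_eulerProd one_pos).comp h2n) ?_
  simp only [Function.comp_def, hsplit]
  exact (tendsto_prod_range_prodOneSubXPow fun j ↦ by omega).mul
    (tendsto_prod_range_eulerProd two_pos)

theorem isUnit_eulerProd (m : ℕ) : IsUnit (eulerProd m) := by
  simp [isUnit_iff_constantCoeff, constantCoeff_eulerProd]

theorem X_pow_dvd_gaussBinom_mul_eulerProd_sub_one (k l : ℕ) :
    (X : ℤ⟦X⟧) ^ (4 * (min k l + 1)) ∣ gaussBinom (X ^ 4) (k + l) k * eulerProd 4 - 1 := by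
  set f := eulerProd 4
  set P := qPochhammer (X ^ 4 : ℤ⟦X⟧)
  have hP : ∀ n, min k l ≤ n → X ^ (4 * (min k l + 1)) ∣ f - P n := fun n hn ↦ by
    simp only [P, qPochhammer, ← pow_mul]
    exact (pow_dvd_pow X (by omega)).trans (X_pow_dvd_eulerProd_sub (by norm_num) n)
  have key : f * (gaussBinom (X ^ 4) (k + l) k * f - 1)
      = gaussBinom (X ^ 4) (k + l) k * (f * (f - P l) + P l * (f - P k)) - (f - P (k + l)) := by
    linear_combination gaussBinom_mul_qPochhammer (X ^ 4 : ℤ⟦X⟧) k l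
  refine (isUnit_eulerProd 4).dvd_mul_left.mp ?_
  rw [key]
  exact dvd_sub (dvd_mul_of_dvd_right (dvd_add (dvd_mul_of_dvd_right (hP l (min_le_right _ _)) _)
    (dvd_mul_of_dvd_right (hP k (min_le_left _ _)) _)) _) (hP _ (by omega))

theorem tendsto_sum_neg_one_pow_mul_X_pow_thetaExp :
    Tendsto (fun n ↦ ∑ r ∈ range (2 * n + 1), (-1) ^ (n + r) * X ^ thetaExp (r - n) : ℕ → ℤ⟦X⟧)
      atTop (𝓝 (prodOneSubXPow (2 * · + 1) * eulerProd 4)) := by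
  have hJ : Tendsto (fun n ↦ (∑ r ∈ range (2 * n + 1), jacobiTerm X n r) * eulerProd 4) atTop
      (𝓝 (prodOneSubXPow (2 * · + 1) * eulerProd 4)) := by
    simp only [← prod_one_sub_pow_odd_eq_sum_jacobiTerm]
    exact ((tendsto_prod_range_prodOneSubXPow fun j ↦ by omega).comp
      (tendsto_id.const_mul_atTop' two_pos)).mul_const _
  have hdiff : Tendsto (fun n ↦ (∑ r ∈ range (2 * n + 1), jacobiTerm X n r) * eulerProd 4
      - ∑ r ∈ range (2 * n + 1), (-1) ^ (n + r) * X ^ thetaExp (r - n)) atTop (𝓝 0) := by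
    refine tendsto_of_X_pow_dvd_sub fun d ↦ ?_
    filter_upwards [eventually_ge_atTop (2 * d)] with n hn
    rw [sub_zero, sum_mul, ← sum_sub_distrib]
    refine dvd_sum fun r hr ↦ ?_
    rw [show jacobiTerm X n r * eulerProd 4 - (-1) ^ (n + r) * X ^ thetaExp (r - n)
      = (-1) ^ (n + r) * X ^ thetaExp (r - n) * (gaussBinom (X ^ 4) (2 * n) r * eulerProd 4 - 1) by
        rw [jacobiTerm]; ring]
    rcases le_or_gt d (thetaExp (r - n)) with hd | hd
    · exact dvd_mul_of_dvd_left (dvd_mul_of_dvd_right (pow_dvd_pow X hd) _) _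
    · have hr := mem_range.mp hr
      have habs := natAbs_le_thetaExp ((r : ℤ) - n)
      obtain ⟨l, hl⟩ : ∃ l, 2 * n = r + l := ⟨2 * n - r, by omega⟩
      rw [hl]
      exact dvd_mul_of_dvd_right ((pow_dvd_pow X (by omega)).trans
        (X_pow_dvd_gaussBinom_mul_eulerProd_sub_one r l)) _
  simpa using hJ.sub hdiff

theorem coeff_prodOneSubXPow_mul_eulerProd_four_eq_zero {d : ℕ} (hd : d % 3 = 2) :
    coeff d (prodOneSubXPow (2 * · + 1) * eulerProd 4 : ℤ⟦X⟧) = 0 := by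
  refine tendsto_nhds_unique
    ((WithPiTopology.tendsto_iff_coeff_tendsto _ _ _ _).mp
      tendsto_sum_neg_one_pow_mul_X_pow_thetaExp d)
    (tendsto_const_nhds.congr fun n ↦ ?_)
  rw [map_sum]
  refine (sum_eq_zero fun r _ ↦ ?_).symm
  have : d ≠ thetaExp (r - n) := fun h ↦ thetaExp_mod_three_ne_two _ (h ▸ hd)
  rcases neg_one_pow_eq_or ℤ⟦X⟧ (n + r) with h | h <;> simp [h, coeff_X_pow, this]

theorem constantCoeff_map_eulerProd {S : Type*} [CommRing S] (φ : ℤ →+* S) (m : ℕ) :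
    constantCoeff (map φ (eulerProd m)) = 1 := by
  rw [← coeff_zero_eq_constantCoeff_apply, coeff_map, coeff_zero_eq_constantCoeff_apply,
    constantCoeff_eulerProd, map_one]

theorem map_eulerProd_ne_zero {S : Type*} [CommRing S] [Nontrivial S] (φ : ℤ →+* S) (m : ℕ) :
    map φ (eulerProd m) ≠ 0 := fun h ↦ by
  simpa [h] using constantCoeff_map_eulerProd φ m

theorem map_eulerProd_pow (p : ℕ) [Fact p.Prime] {m : ℕ} (hm : 0 < m) :
    map (Int.castRingHom (ZMod p)) (eulerProd m) ^ p
      = map (Int.castRingHom (ZMod p)) (eulerProd (p * m)) := by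
  refine tendsto_nhds_unique (((tendsto_prod_range_eulerProd hm).powerSeries_map _).pow p)
    (((tendsto_prod_range_eulerProd (Nat.mul_pos (Fact.out : p.Prime).pos hm)).powerSeries_map
      _).congr fun n ↦ ?_)
  have : CharP (ZMod p)⟦X⟧ p := charP_of_injective_ringHom C_injective p
  simp only [map_prod, map_sub, map_one, map_pow, map_X, ← prod_pow]
  refine prod_congr rfl fun j _ ↦ ?_
  rw [sub_pow_char, one_pow, ← pow_mul]
  ring

theorem eulerProd_mul_eq_expand (p : ℕ) (hp : p ≠ 0) {m : ℕ} (hm : 0 < m) :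
    eulerProd (p * m) = expand p hp (eulerProd m) := by
  refine tendsto_nhds_unique (tendsto_prod_range_eulerProd (Nat.mul_pos (Nat.pos_of_ne_zero hp) hm))
    (((tendsto_prod_range_eulerProd hm).powerSeries_expand p hp).congr fun n ↦ ?_)
  simp only [map_prod, map_sub, map_one, map_pow, expand_X, ← pow_mul, mul_assoc]

theorem coeff_expand_mul_eq_zero {R : Type*} [CommRing R] {p : ℕ} (hp : p ≠ 0) {f g : R⟦X⟧} {n : ℕ}
    (hg : ∀ j, j % p = n % p → coeff j g = 0) : coeff n (expand p hp f * g) = 0 := by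
  rw [coeff_mul]
  refine sum_eq_zero fun ij hij ↦ ?_
  rw [HasAntidiagonal.mem_antidiagonal] at hij
  by_cases h : p ∣ ij.1
  · obtain ⟨c, hc⟩ := h
    rw [hg ij.2 (by rw [← hij, hc, Nat.mul_add_mod]), mul_zero]
  · rw [coeff_expand_of_not_dvd p hp f h, zero_mul]

theorem two_dvd_of_mul_eulerProd_eq {a : ℕ → ℤ} {k : ℕ}
    (ha : mk a * eulerProd 1 ^ 2 * eulerProd 2 ^ (2 * k + 1) = eulerProd 4 ^ (k + 1))
    {n : ℕ} (hn : n ≠ 0) : 2 ∣ a n := by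
  set φ := Int.castRingHom (ZMod 2)
  have h12 : map φ (eulerProd 1) ^ 2 = map φ (eulerProd 2) := map_eulerProd_pow 2 one_pos
  have h24 : map φ (eulerProd 2) ^ 2 = map φ (eulerProd 4) := map_eulerProd_pow 2 two_pos
  have hA : map φ (mk a) = 1 := by
    have h := congrArg (map φ) ha
    simp only [map_mul, map_pow, h12, ← h24] at h
    refine mul_right_cancel₀ (pow_ne_zero (2 * k + 2) (map_eulerProd_ne_zero φ 2)) ?_
    linear_combination h
  have h := congrArg (coeff n) hA
  rw [coeff_map, coeff_mk, coeff_one, if_neg hn] at h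
  exact (ZMod.intCast_zmod_eq_zero_iff_dvd _ 2).mp h

theorem three_dvd_of_mul_eulerProd_eq {a : ℕ → ℤ} {i : ℕ}
    (ha : mk a * eulerProd 1 ^ 2 * eulerProd 2 ^ (2 * (3 * i) + 1) = eulerProd 4 ^ (3 * i + 1))
    {n : ℕ} (hn : n % 3 = 2) : 3 ∣ a n := by
  set φ := Int.castRingHom (ZMod 3)
  set E := expand 3 three_ne_zero (R := ZMod 3)
  have hcube : ∀ m, 0 < m → map φ (eulerProd m) ^ 3 = E (map φ (eulerProd m)) := fun m hm ↦ by
    rw [map_eulerProd_pow 3 hm, eulerProd_mul_eq_expand 3 three_ne_zero hm, map_expand]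
  set V := map φ (eulerProd 1) * map φ (eulerProd 2) ^ (2 * i) with hVdef
  have hA : map φ (mk a) * E V = E (map φ (eulerProd 4) ^ i)
      * map φ (prodOneSubXPow (2 * · + 1) * eulerProd 4) := by
    have h := congrArg (map φ) ha
    have hO := congrArg (map φ) eulerProd_one_eq_mul
    simp only [hVdef, map_mul, map_pow] at h hO ⊢
    refine mul_right_cancel₀ (map_eulerProd_ne_zero φ 2) ?_
    rw [← hcube 1 one_pos, ← hcube 2 two_pos, ← hcube 4 (by norm_num)]
    linear_combination map φ (eulerProd 1) * h + map φ (eulerProd 4) ^ (3 * i + 1) * hO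
  have hV : E V * E V⁻¹ = 1 := by
    rw [← map_mul, PowerSeries.mul_inv_cancel, map_one]
    simp [V, constantCoeff_map_eulerProd]
  have hA' : map φ (mk a) = E (map φ (eulerProd 4) ^ i * V⁻¹)
      * map φ (prodOneSubXPow (2 * · + 1) * eulerProd 4) := by
    rw [map_mul]
    linear_combination E V⁻¹ * hA - map φ (mk a) * hV
  have h := congrArg (coeff n) hA'
  rw [coeff_expand_mul_eq_zero _ fun j hj ↦ by
    rw [coeff_map, coeff_prodOneSubXPow_mul_eulerProd_four_eq_zero (by omega), map_zero],
    coeff_map, coeff_mk] at h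
  exact (ZMod.intCast_zmod_eq_zero_iff_dvd _ 3).mp h

theorem stmt_14_general (i : ℕ) (a : ℕ → ℤ)
    (ha : PowerSeries.mk a * eulerProd 1 ^ 2 * eulerProd 2 ^ (2 * (3 * i + 2) - 3) =
      eulerProd 4 ^ (3 * i + 2 - 1)) :
    ∀ n : ℕ, (6 : ℤ) ∣ a (3 * n + 2) := by
  rw [show 2 * (3 * i + 2) - 3 = 2 * (3 * i) + 1 by omega, show 3 * i + 2 - 1 = 3 * i + 1 by omega]
    at ha
  intro n
  have h2 := two_dvd_of_mul_eulerProd_eq ha (n := 3 * n + 2) (by omega)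
  have h3 := three_dvd_of_mul_eulerProd_eq ha (n := 3 * n + 2) (by omega)
  omega

/-- For all n ≥ 0 and i ≥ 1, ā_{3i+2}(3n+2) ≡ 0 (mod 6), where ā_c is
determined by the generating function Σ ā_c(n) qⁿ = f₄^{c-1} / (f₁² f₂^{2c-3}),
written with cleared denominators (for c = 3i+2, 2c-3 = 6i+1 ≥ 0). -/
theorem stmt_14 (i : ℕ) (hi : 1 ≤ i) (a : ℕ → ℤ)
    (ha : PowerSeries.mk a * eulerProd 1 ^ 2 * eulerProd 2 ^ (2 * (3 * i + 2) - 3) =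
      eulerProd 4 ^ (3 * i + 2 - 1)) :
    ∀ n : ℕ, (6 : ℤ) ∣ a (3 * n + 2) :=
  stmt_14_general i a ha
end
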